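/- Suppose H₀, K, G are complex Hilbert spaces, R is a bounded operator on K, U is a unitary operator on G, and (Y, U) is a unitary asymptote of R. Suppose E is a hyperinvariant subspace of U such that M := {y ∈ K : Y y ∈ E} satisfies {0} ≠ M ≠ K. Set K₀ = K ⊖ M and R₀ = P_{K₀} R|_{K₀}, where P_{K₀} is the orthogonal projection onto K₀. Suppose T₀ is a bounded operator on H₀, J : H₀ → K is a quasiaffinity with J T₀ = R J, (Y J, U) is a unitary asymptote of T₀, and T₀ is quasianalytic with respect to this asymptote: for every hyperinvariant subspace E' of U with E' ≠ G one has {x ∈ H₀ : Y J x ∈ E'} = {0}. Then P_{K₀} J : H₀ → K₀ is a quasiaffinity and P_{K₀} J T₀ = R₀ P_{K₀} J. -/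
import Mathlib


noncomputable section
set_option linter.unusedSectionVars false
open scoped ENNReal InnerProductSpace
open ContinuousLinearMap

/-- A bounded operator `V` is an isometry. -/
def IsIsometryOp {K : Type} [NormedAddCommGroup K] [InnerProductSpace ℂ K]
    (V : K →L[ℂ] K) : Prop :=
  ∀ x, ‖V x‖ = ‖x‖

/-- A bounded operator `V` is unitary: an isometry onto. -/
def IsUnitaryOp {K : Type} [NormedAddCommGroup K] [InnerProductSpace ℂ K]
    (V : K →L[ℂ] K) : Prop :=
  (∀ x, ‖V x‖ = ‖x‖) ∧ Function.Surjective V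

/-- `(X, U)` is a unitary asymptote of `T`: `U` is unitary, `X` intertwines `T` with `U`,
the pair is minimal (`⋁_{n ≥ 0} U^{-n} X H = K`), and it has the universal property with
respect to every pair `(Y, W)` with `W` unitary on a Hilbert space and `Y T = W Y`. -/
def IsUnitaryAsymptote {H : Type} [NormedAddCommGroup H] [InnerProductSpace ℂ H]
    [CompleteSpace H] (T : H →L[ℂ] H)
    (K : Type) [NormedAddCommGroup K] [InnerProductSpace ℂ K] [CompleteSpace K]
    (X : H →L[ℂ] K) (U : K →L[ℂ] K) : Prop :=
  IsUnitaryOp U ∧ X.comp T = U.comp X ∧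
    (Submodule.span ℂ (⋃ n : ℕ, ⇑(U ^ n) ⁻¹' Set.range X)).topologicalClosure = ⊤ ∧
    ∀ (K' : Type) [NormedAddCommGroup K'] [InnerProductSpace ℂ K'] [CompleteSpace K']
      (W : K' →L[ℂ] K') (Y : H →L[ℂ] K'), IsUnitaryOp W → Y.comp T = W.comp Y →
      ∃! Z : K →L[ℂ] K', Z.comp U = W.comp Z ∧ Y = Z.comp X

/-- A closed subspace `E` is hyperinvariant for `U`: it is invariant under every bounded
operator commuting with `U`. -/
def IsHyperinvariant {G : Type} [NormedAddCommGroup G] [InnerProductSpace ℂ G]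
    (U : G →L[ℂ] G) (E : Submodule ℂ G) : Prop :=
  IsClosed (E : Set G) ∧ ∀ A : G →L[ℂ] G, A.comp U = U.comp A → ∀ x ∈ E, A x ∈ E

/-- Suppose `(Y, U)` is a unitary asymptote of `R`, `E` is a hyperinvariant subspace of `U`
with `{0} ≠ M := Y⁻¹E ≠ K`, `K₀ = K ⊖ M`, `R₀ = P_{K₀} R|_{K₀}`, `T₀` is quasianalytic,
`J` is a quasiaffinity with `J T₀ = R J` and `(Y J, U)` a unitary asymptote of `T₀`.  Then
`P_{K₀} J` is a quasiaffinity (as a map into `K₀ = Mᗮ`) and `P_{K₀} J T₀ = R₀ P_{K₀} J`.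
Here `P : K → K` denotes the orthogonal projection of `K` onto `Mᗮ`. -/
theorem compressed_quasiaffinity_of_quasianalytic
    {H₀ K G : Type}
    [NormedAddCommGroup H₀] [InnerProductSpace ℂ H₀] [CompleteSpace H₀]
    [NormedAddCommGroup K] [InnerProductSpace ℂ K] [CompleteSpace K]
    [NormedAddCommGroup G] [InnerProductSpace ℂ G] [CompleteSpace G]
    (R : K →L[ℂ] K) (U : G →L[ℂ] G) (Y : K →L[ℂ] G)
    (hYU : IsUnitaryAsymptote R G Y U)
    (E : Submodule ℂ G) (hE : IsHyperinvariant U E)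
    (M : Submodule ℂ K) (hM : M = Submodule.comap (↑Y : K →ₗ[ℂ] G) E)
    (hMbot : M ≠ ⊥) (hMtop : M ≠ ⊤)
    -- `P` is the orthogonal projection of `K` onto `K₀ = Mᗮ`:
    (P : K →L[ℂ] K) (hPmem : ∀ x : K, P x ∈ Mᗮ) (hPid : ∀ x : K, x - P x ∈ M)
    (T₀ : H₀ →L[ℂ] H₀) (J : H₀ →L[ℂ] K)
    (hJinj : Function.Injective J) (hJdense : DenseRange J)
    (hJT : J.comp T₀ = R.comp J)
    (hYJ : IsUnitaryAsymptote T₀ G (Y.comp J) U)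
    (hquasianalytic : ∀ E' : Submodule ℂ G, IsHyperinvariant U E' → E' ≠ ⊤ →
      ∀ x : H₀, Y (J x) ∈ E' → x = 0) :
    Function.Injective (P.comp J) ∧
    closure (Set.range fun x : H₀ => P (J x)) = (Mᗮ : Set K) ∧
    ∀ x : H₀, P (J (T₀ x)) = P (R (P (J x))) := by

  have hEne : E ≠ ⊤ := by
    intro h
    apply hMtop
    rw [hM, h, Submodule.comap_top]
  have hPzeroM : ∀ m ∈ M, P m = 0 := by
    intro m hm
    have h1 : P m ∈ M := by
      have h2 := hPid m
      have h3 : P m = m - (m - P m) := by abel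
      rw [h3]; exact Submodule.sub_mem M hm h2
    have h3 : P m ∈ Mᗮ := hPmem m
    have h4 := (Submodule.mem_orthogonal M (P m)).mp h3 (P m) h1
    exact inner_self_eq_zero.mp h4
  have hfix : ∀ y ∈ Mᗮ, P y = y := by
    intro y hy
    have h1 : y - P y ∈ Mᗮ := Submodule.sub_mem _ hy (hPmem y)
    have h2 : y - P y ∈ M := hPid y
    have h3 := (Submodule.mem_orthogonal M _).mp h1 _ h2
    have h0 : y - P y = 0 := inner_self_eq_zero.mp h3
    have := sub_eq_zero.mp h0
    exact this.symm
  have hRM : ∀ m ∈ M, R m ∈ M := by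
    intro m hm
    rw [hM] at hm ⊢
    have hm' : Y m ∈ E := hm
    have hint : Y (R m) = U (Y m) := by
      calc Y (R m) = (Y.comp R) m := rfl
        _ = (U.comp Y) m := by rw [hYU.2.1]
        _ = U (Y m) := rfl
    show Y (R m) ∈ E
    rw [hint]
    exact hE.2 U rfl _ hm'
  refine ⟨?_, ?_, ?_⟩
  · apply (injective_iff_map_eq_zero (P.comp J)).mpr
    intro x hx
    have hx' : P (J x) = 0 := hx
    have hJM : J x ∈ M := by
      have := hPid (J x); rwa [hx', sub_zero] at this
    apply hquasianalytic E hE hEne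
    rw [hM] at hJM
    exact hJM
  · apply Set.Subset.antisymm
    · apply closure_minimal
      · rintro _ ⟨x, rfl⟩; exact hPmem (J x)
      · exact Submodule.isClosed_orthogonal M
    · intro y hy
      have h1 : y ∈ closure (Set.range J) := hJdense y
      have h2 : P y ∈ closure (Set.range fun x : H₀ => P (J x)) := by
        refine map_mem_closure P.continuous h1 ?_
        rintro _ ⟨x, rfl⟩; exact ⟨x, rfl⟩
      rwa [hfix y hy] at h2
  · intro x
    have h1 : J (T₀ x) = R (J x) := ContinuousLinearMap.ext_iff.mp hJT x
    rw [h1]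
    have h2 : R (J x) - R (P (J x)) ∈ M := by
      have h3 : J x - P (J x) ∈ M := hPid (J x)
      have h4 := hRM _ h3
      rwa [map_sub] at h4
    have h5 : P (R (J x)) - P (R (P (J x))) = 0 := by
      rw [← map_sub]; exact hPzeroM _ h2
    exact sub_eq_zero.mp h5
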